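/- arXiv:1710.07453 — 3 statements merged into one kernel-verified Lean document; each statement's English description precedes it below -/
import Mathlib

section
/- Let m₁, m₂ ≥ 2 be integers and c = (c_{j₁,j₂}) ∈ ℝ^{m₁×m₂}. Define F_c(x₁,x₂) = Σ_{j₁=1}^{m₁} Σ_{j₂=1}^{m₂} c_{j₁,j₂} φ_{j₁}^{(m₁)}(x₁) φ_{j₂}^{(m₂)}(x₂) on [0,1]². Then the map x₁ ↦ F_c(x₁,x₂) is non-decreasing on [0,1] for every x₂ ∈ [0,1] if and only if c_{j₁−1,j₂} ≤ c_{j₁,j₂} for all j₁ = 2,…,m₁ and all j₂ = 1,…,m₂. -/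
/-!
The hat functions are nodal, `φ_j(t_k) = δ_{jk}`, so `F_c(t_{j₁}, t_{j₂}) = c_{j₁,j₂}` and
monotonicity of `F_c` in `x₁` along the knots forces `c_{j₁,j₂} ≤ c_{j₁+1,j₂}`. Conversely, for
fixed `x₂` the map `x₁ ↦ F_c(x₁, x₂)` is the hat combination with coefficients
`b_{j₁} = Σ_{j₂} c_{j₁,j₂} φ_{j₂}(x₂)`, which are non-decreasing because `φ_{j₂} ≥ 0`; a hat
combination is affine between consecutive knots, with slope `(m - 1)(b_{k+1} - b_k) ≥ 0`.
-/

open Finset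

/-- Knots `t_j^{(m)} = (j-1) Δ_m` (0-indexed: `t_j = j/(m-1)`). -/
noncomputable def knot (m : ℕ) (j : Fin m) : ℝ := ((j : ℕ) : ℝ) / ((m : ℝ) - 1)

/-- Hat basis functions `φ_j^{(m)}(x) = max(0, 1 - |x - t_j^{(m)}|/Δ_m)` with `Δ_m = 1/(m-1)`. -/
noncomputable def hat (m : ℕ) (j : Fin m) (x : ℝ) : ℝ :=
  max 0 (1 - |x - knot m j| * ((m : ℝ) - 1))

/-- The 2D tensorised approximation
`F_c(x₁,x₂) = Σ_{j₁} Σ_{j₂} c_{j₁,j₂} φ_{j₁}^{(m₁)}(x₁) φ_{j₂}^{(m₂)}(x₂)`. -/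
noncomputable def Fc (m₁ m₂ : ℕ) (c : Fin m₁ → Fin m₂ → ℝ) (x₁ x₂ : ℝ) : ℝ :=
  ∑ j₁ : Fin m₁, ∑ j₂ : Fin m₂, c j₁ j₂ * hat m₁ j₁ x₁ * hat m₂ j₂ x₂

theorem MonotoneOn.Icc_of_forall_Icc_succ {α β : Type*} [LinearOrder α] [Preorder β]
    {f : α → β} {p : ℕ → α} (hp : Monotone p) {n : ℕ}
    (hf : ∀ k < n, MonotoneOn f (Set.Icc (p k) (p (k + 1)))) :
    MonotoneOn f (Set.Icc (p 0) (p n)) := by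
  induction n with
  | zero => exact Set.Icc_self (p 0) ▸ Set.subsingleton_singleton.monotoneOn f
  | succ n ih =>
    have hglue := (ih fun k hk => hf k (by omega)).union_right (hf n n.lt_succ_self)
      (isGreatest_Icc (hp (Nat.zero_le n))) (isLeast_Icc (hp n.le_succ))
    rwa [Set.Icc_union_Icc_eq_Icc (hp (Nat.zero_le n)) (hp n.le_succ)] at hglue

variable {m : ℕ}

lemma hat_nonneg (j : Fin m) (x : ℝ) : 0 ≤ hat m j x := le_max_left _ _

lemma cast_sub_one_pos (hm : 1 < m) : (0 : ℝ) < m - 1 := sub_pos.mpr (Nat.one_lt_cast.mpr hm)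

lemma knot_mul (hm : 1 < m) (j : Fin m) : knot m j * (m - 1) = j :=
  div_mul_cancel₀ _ (cast_sub_one_pos hm).ne'

lemma hat_eq (hm : 1 < m) (j : Fin m) (x : ℝ) :
    hat m j x = max 0 (1 - |x * (m - 1) - j|) := by
  have hM := cast_sub_one_pos hm
  rw [hat, ← abs_of_pos hM, ← abs_mul, sub_mul, abs_of_pos hM, knot_mul hm]

lemma hat_eq_zero_of_one_le_dist (hm : 1 < m) {j : Fin m} {x : ℝ}
    (h : (j : ℝ) + 1 ≤ x * (m - 1) ∨ x * (m - 1) + 1 ≤ j) : hat m j x = 0 := by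
  rw [hat_eq hm, max_eq_left]
  rcases h with h | h
  · linarith [le_abs_self (x * (m - 1) - j)]
  · linarith [neg_abs_le (x * (m - 1) - j)]

lemma hat_knot (j k : Fin m) : hat m j (knot m k) = if k = j then 1 else 0 := by
  split_ifs with hkj
  · simp [hat, hkj]
  · have hm : 1 < m := by have := Fin.val_ne_of_ne hkj; omega
    apply hat_eq_zero_of_one_le_dist hm
    rw [knot_mul hm]
    rcases Nat.lt_or_gt_of_ne (Fin.val_ne_of_ne hkj) with h | h
    · exact Or.inr (by exact_mod_cast h)
    · exact Or.inl (by exact_mod_cast h)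

lemma knot_mem_Icc (j : Fin m) : knot m j ∈ Set.Icc (0 : ℝ) 1 := by
  have hj : (j : ℝ) + 1 ≤ m := by exact_mod_cast j.isLt
  exact ⟨div_nonneg j.val.cast_nonneg (by linarith), div_le_one_of_le₀ (by linarith) (by linarith)⟩

lemma knot_monotone : Monotone (knot m) := fun j _ hjk =>
  div_le_div_of_nonneg_right (Nat.cast_le.mpr hjk)
    (sub_nonneg.mpr (Nat.one_le_cast.mpr j.pos))

lemma sum_mul_hat_of_mem_Icc (b : Fin m → ℝ) {k : ℕ} (hk : k + 1 < m) {x : ℝ}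
    (hx : x * (m - 1) ∈ Set.Icc (k : ℝ) (k + 1)) :
    ∑ j, b j * hat m j x =
      b ⟨k, by omega⟩ + (b ⟨k + 1, hk⟩ - b ⟨k, by omega⟩) * (x * (m - 1) - k) := by
  have hm : 1 < m := by omega
  obtain ⟨hkx, hxk⟩ := hx
  rw [Fintype.sum_eq_add ⟨k, by omega⟩ ⟨k + 1, hk⟩ (by simp [Fin.ext_iff])]
  · rw [hat_eq hm, hat_eq hm]
    push_cast
    rw [abs_of_nonneg (by linarith), abs_of_nonpos (by linarith), max_eq_right (by linarith),
      max_eq_right (by linarith)]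
    ring
  · rintro j ⟨hjk, hjk'⟩
    have hj : (j : ℕ) + 1 ≤ k ∨ k + 2 ≤ (j : ℕ) := by
      simp only [ne_eq, Fin.ext_iff] at hjk hjk'
      omega
    rw [hat_eq_zero_of_one_le_dist hm, mul_zero]
    rcases hj with hj | hj
    · exact Or.inl (by linarith [show (j : ℝ) + 1 ≤ k by exact_mod_cast hj])
    · exact Or.inr (by linarith [show (k : ℝ) + 2 ≤ j by exact_mod_cast hj])

lemma monotoneOn_sum_mul_hat (hm : 2 ≤ m) (b : Fin m → ℝ)
    (hb : ∀ k (hk : k + 1 < m), b ⟨k, by omega⟩ ≤ b ⟨k + 1, hk⟩) :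
    MonotoneOn (fun x => ∑ j, b j * hat m j x) (Set.Icc (0 : ℝ) 1) := by
  have hM := cast_sub_one_pos (by omega : 1 < m)
  have hseg : ∀ k < m - 1, MonotoneOn (fun x => ∑ j, b j * hat m j x)
      (Set.Icc ((k : ℝ) / (m - 1)) (((k + 1 : ℕ) : ℝ) / (m - 1))) := by
    intro k hk x hx y hy hxy
    have hmem : ∀ z ∈ Set.Icc ((k : ℝ) / (m - 1)) (((k + 1 : ℕ) : ℝ) / (m - 1)),
        z * (m - 1) ∈ Set.Icc (k : ℝ) (k + 1) := fun z hz =>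
      ⟨(div_le_iff₀ hM).mp hz.1, by exact_mod_cast (le_div_iff₀ hM).mp hz.2⟩
    simp only [sum_mul_hat_of_mem_Icc b (by omega) (hmem x hx),
      sum_mul_hat_of_mem_Icc b (by omega) (hmem y hy)]
    have := sub_nonneg.mpr (hb k (by omega))
    gcongr
  have hmono := MonotoneOn.Icc_of_forall_Icc_succ
    (fun a b hab => div_le_div_of_nonneg_right (Nat.cast_le.mpr hab) hM.le) hseg
  rwa [Nat.cast_zero, zero_div, Nat.cast_sub (by omega), Nat.cast_one, div_self hM.ne'] at hmono

lemma Fc_knot {m₁ m₂ : ℕ} (c : Fin m₁ → Fin m₂ → ℝ) (j₁ : Fin m₁) (j₂ : Fin m₂) :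
    Fc m₁ m₂ c (knot m₁ j₁) (knot m₂ j₂) = c j₁ j₂ := by
  simp [Fc, hat_knot]

lemma Fc_eq_sum_mul_hat {m₁ m₂ : ℕ} (c : Fin m₁ → Fin m₂ → ℝ) (x₁ x₂ : ℝ) :
    Fc m₁ m₂ c x₁ x₂ = ∑ j₁, (∑ j₂, c j₁ j₂ * hat m₂ j₂ x₂) * hat m₁ j₁ x₁ := by
  simp only [Fc, Finset.sum_mul, mul_right_comm]

theorem Fc_monotone_first_iff_general (m₁ m₂ : ℕ) (hm₁ : 2 ≤ m₁)
    (c : Fin m₁ → Fin m₂ → ℝ) :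
    (∀ x₂ ∈ Set.Icc (0 : ℝ) 1, MonotoneOn (fun x₁ => Fc m₁ m₂ c x₁ x₂) (Set.Icc (0 : ℝ) 1)) ↔
      (∀ j₁ : Fin m₁, ∀ hj : (j₁ : ℕ) + 1 < m₁, ∀ j₂ : Fin m₂,
        c j₁ j₂ ≤ c ⟨(j₁ : ℕ) + 1, hj⟩ j₂) := by
  constructor
  · intro hmono j₁ hj j₂
    simpa only [Fc_knot] using hmono (knot m₂ j₂) (knot_mem_Icc j₂) (knot_mem_Icc j₁)
      (knot_mem_Icc _) (knot_monotone (Fin.le_def.mpr (Nat.le_succ _)))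
  · intro hc x₂ _
    simp only [Fc_eq_sum_mul_hat]
    exact monotoneOn_sum_mul_hat hm₁ _ fun k hk => Finset.sum_le_sum fun j₂ _ =>
      mul_le_mul_of_nonneg_right (hc ⟨k, by omega⟩ hk j₂) (hat_nonneg _ _)

/-- `x₁ ↦ F_c(x₁,x₂)` is non-decreasing on `[0,1]` for every `x₂ ∈ [0,1]` iff the
coefficients are non-decreasing in their first index. -/
theorem Fc_monotone_first_iff (m₁ m₂ : ℕ) (hm₁ : 2 ≤ m₁) (hm₂ : 2 ≤ m₂)
    (c : Fin m₁ → Fin m₂ → ℝ) :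
    (∀ x₂ ∈ Set.Icc (0 : ℝ) 1, MonotoneOn (fun x₁ => Fc m₁ m₂ c x₁ x₂) (Set.Icc (0 : ℝ) 1)) ↔
      (∀ j₁ : Fin m₁, ∀ hj : (j₁ : ℕ) + 1 < m₁, ∀ j₂ : Fin m₂,
        c j₁ j₂ ≤ c ⟨(j₁ : ℕ) + 1, hj⟩ j₂) :=
  Fc_monotone_first_iff_general m₁ m₂ hm₁ c
end

section
/- Let (Ω, F, μ) be a probability space and B ∈ F with μ(B) > 0. Let Θ ⊂ ℝ^p, θ* ∈ Θ, and ε > 0. For each n, let L_n, a_n : Ω × Θ → ℝ be such that all suprema below are measurable in ω, and let b : Θ → ℝ. Assume: (i) a_n(ω, θ) ≤ 0 for all ω, θ, n; (ii) for every δ > 0, μ({ω : a_n(ω, θ*) ≤ −δ} ∩ B)/μ(B) → 0 as n → ∞; (iii) there exists C < ∞ with b(θ*) − b(θ) ≤ C for all θ ∈ Θ; (iv) for every M > 0, μ({ω : sup_{θ ∈ Θ, ‖θ−θ*‖ ≥ ε} (L_n(ω,θ) − L_n(ω,θ*)) ≥ −M}) → 0 as n → ∞. Define L̃_n(ω,θ)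 = L_n(ω,θ) + a_n(ω,θ) − b(θ). Then for every M > 0, μ({ω : sup_{θ ∈ Θ, ‖θ−θ*‖ ≥ ε} (L̃_n(ω,θ) − L̃_n(ω,θ*)) ≥ −M} ∩ B)/μ(B) → 0 as n → ∞. -/
open MeasureTheory Filter

/-!
Outside the event `{a_n(θ*) ≤ -1}`, every constrained log-likelihood ratio exceeds the
unconstrained one by at most `1 + C`, because `a_n ≤ 0` and `b(θ*) - b(θ) ≤ C`. Hence, on `B`,
the constrained event at level `M` is covered by the unconstrained event at level `M + 1 + C`,
whose probability vanishes, and by `{a_n(θ*) ≤ -1} ∩ B`, whose conditional probability vanishes.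
-/

/-- The nonnegativity of `M` and `K` covers the junk value `sSup = 0` of an empty or unbounded
set of reals. -/
theorem neg_add_le_sSup_image_of_le_add {α : Type*} {S : Set α} {f g : α → ℝ} {M K : ℝ}
    (hM : 0 ≤ M) (hK : 0 ≤ K) (hfg : ∀ x ∈ S, f x ≤ g x + K) (hf : -M ≤ sSup (f '' S)) :
    -(M + K) ≤ sSup (g '' S) := by
  rcases S.eq_empty_or_nonempty with rfl | hS
  · simp only [Set.image_empty, Real.sSup_empty]
    linarith
  by_cases hg : BddAbove (g '' S)
  · have hfg_sup : sSup (f '' S) ≤ sSup (g '' S) + K := by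
      refine csSup_le (hS.image f) ?_
      rintro _ ⟨x, hx, rfl⟩
      linarith [hfg x hx, le_csSup hg ⟨x, hx, rfl⟩]
    linarith
  · rw [Real.sSup_of_not_bddAbove hg]
    linarith

theorem tendsto_measure_inter_div_of_subset_union {Ω ι : Type*} [MeasurableSpace Ω]
    {μ : Measure Ω} {B : Set Ω} (hB : μ B ≠ 0) {l : Filter ι} {E F G : ι → Set Ω}
    (hEFG : ∀ i, E i ∩ B ⊆ F i ∪ G i ∩ B) (hF : Tendsto (fun i => μ (F i)) l (nhds 0))
    (hG : Tendsto (fun i => μ (G i ∩ B) / μ B) l (nhds 0)) :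
    Tendsto (fun i => μ (E i ∩ B) / μ B) l (nhds 0) := by
  have hF_div : Tendsto (fun i => μ (F i) / μ B) l (nhds 0) := by
    simpa using ENNReal.Tendsto.div_const hF (Or.inr hB)
  refine tendsto_of_tendsto_of_tendsto_of_le_of_le tendsto_const_nhds
    (by simpa using hF_div.add hG) (fun _ => zero_le) fun i => ?_
  calc μ (E i ∩ B) / μ B ≤ (μ (F i) + μ (G i ∩ B)) / μ B :=
        ENNReal.div_le_div_right ((measure_mono (hEFG i)).trans (measure_union_le _ _)) _
    _ = μ (F i) / μ B + μ (G i ∩ B) / μ B := ENNReal.add_div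

theorem constrained_likelihood_divergence_transfer_general {Ω : Type*} [MeasurableSpace Ω]
    (μ : Measure Ω) (B : Set Ω)
    (hBpos : 0 < μ B) (p : ℕ)
    (Θ : Set (EuclideanSpace ℝ (Fin p))) (θstar : EuclideanSpace ℝ (Fin p))
    (ε : ℝ)
    (L a : ℕ → Ω → EuclideanSpace ℝ (Fin p) → ℝ)
    (b : EuclideanSpace ℝ (Fin p) → ℝ)
    (ha_nonpos : ∀ (n : ℕ) (ω : Ω) (θ : EuclideanSpace ℝ (Fin p)), a n ω θ ≤ 0)
    (ha_star : ∀ δ > 0,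
      Tendsto (fun n => μ ({ω | a n ω θstar ≤ -δ} ∩ B) / μ B) atTop (nhds 0))
    (hb : ∃ C : ℝ, ∀ θ ∈ Θ, b θstar - b θ ≤ C)
    (hL : ∀ M > 0,
      Tendsto (fun n => μ {ω |
          -M ≤ sSup ((fun θ => L n ω θ - L n ω θstar) '' {θ | θ ∈ Θ ∧ ε ≤ ‖θ - θstar‖})})
        atTop (nhds 0)) :
    ∀ M > 0,
      Tendsto (fun n => μ ({ω |
          -M ≤ sSup ((fun θ => (L n ω θ + a n ω θ - b θ) -
            (L n ω θstar + a n ω θstar - b θstar)) '' {θ | θ ∈ Θ ∧ ε ≤ ‖θ - θstar‖})} ∩ B)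
          / μ B) atTop (nhds 0) := by
  intro M hM
  obtain ⟨C, hC⟩ := hb
  have hK : 0 ≤ 1 + max C 0 := by positivity
  refine tendsto_measure_inter_div_of_subset_union hBpos.ne'
    (fun n ω ⟨hω, hωB⟩ => ?_) (hL (M + (1 + max C 0)) (by positivity)) (ha_star 1 one_pos)
  by_cases ha_one : a n ω θstar ≤ -1
  · exact Or.inr ⟨ha_one, hωB⟩
  refine Or.inl (neg_add_le_sSup_image_of_le_add hM.le hK (fun θ hθ => ?_) hω)
  linarith [ha_nonpos n ω θ, hC θ hθ.1, le_max_left C 0]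

/-- Transfer of the uniform likelihood-ratio divergence from the unconstrained
log-likelihood `L_n` to the constrained log-likelihood
`L̃_n(θ) = L_n(θ) + a_n(θ) - b(θ)`, conditionally on the constraint event `B`. -/
theorem constrained_likelihood_divergence_transfer {Ω : Type*} [MeasurableSpace Ω]
    (μ : Measure Ω) [IsProbabilityMeasure μ] (B : Set Ω) (hB : MeasurableSet B)
    (hBpos : 0 < μ B) (p : ℕ)
    (Θ : Set (EuclideanSpace ℝ (Fin p))) (θstar : EuclideanSpace ℝ (Fin p))
    (hθstar : θstar ∈ Θ) (ε : ℝ) (hε : 0 < ε)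
    (L a : ℕ → Ω → EuclideanSpace ℝ (Fin p) → ℝ)
    (b : EuclideanSpace ℝ (Fin p) → ℝ)
    (hmeasL : ∀ n : ℕ, Measurable (fun ω =>
      sSup ((fun θ => L n ω θ - L n ω θstar) '' {θ | θ ∈ Θ ∧ ε ≤ ‖θ - θstar‖})))
    (hmeasLt : ∀ n : ℕ, Measurable (fun ω =>
      sSup ((fun θ => (L n ω θ + a n ω θ - b θ) - (L n ω θstar + a n ω θstar - b θstar)) ''
        {θ | θ ∈ Θ ∧ ε ≤ ‖θ - θstar‖})))
    (ha_nonpos : ∀ (n : ℕ) (ω : Ω) (θ : EuclideanSpace ℝ (Fin p)), a n ω θ ≤ 0)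
    (ha_star : ∀ δ > 0,
      Tendsto (fun n => μ ({ω | a n ω θstar ≤ -δ} ∩ B) / μ B) atTop (nhds 0))
    (hb : ∃ C : ℝ, ∀ θ ∈ Θ, b θstar - b θ ≤ C)
    (hL : ∀ M > 0,
      Tendsto (fun n => μ {ω |
          -M ≤ sSup ((fun θ => L n ω θ - L n ω θstar) '' {θ | θ ∈ Θ ∧ ε ≤ ‖θ - θstar‖})})
        atTop (nhds 0)) :
    ∀ M > 0,
      Tendsto (fun n => μ ({ω |
          -M ≤ sSup ((fun θ => (L n ω θ + a n ω θ - b θ) -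
            (L n ω θstar + a n ω θstar - b θstar)) '' {θ | θ ∈ Θ ∧ ε ≤ ‖θ - θstar‖})} ∩ B)
          / μ B) atTop (nhds 0) :=
  constrained_likelihood_divergence_transfer_general μ B hBpos p Θ θstar ε L a b ha_nonpos ha_star
    hb hL
end

section
/- Let X ⊂ ℝ^d be a bounded set and x₀ ∈ ℝ^d. For τ > 0 define f_τ : ℝ^d → ℝ by f_τ(x) = (Σ_{j=1}^d x_j²)·exp(−τ‖x − x₀‖²). Then there exists τ > 0 such that for all x ∈ X, the Hessian matrix ∇²f_τ(x) satisfies vᵀ(∇²f_τ(x))v ≥ ‖v‖² for all v ∈ ℝ^d; that is, the smallest eigenvalue of ∇²f_τ(x) is at least 1 on X. -/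
/-!
Along a direction `v`, the second derivative of `‖z‖² exp(-τ‖z - x₀‖²)` at `x` is
`exp(-τ‖x - x₀‖²) (2‖v‖² - 8τ⟪x, v⟫⟪x - x₀, v⟫ + 4τ²‖x‖²⟪x - x₀, v⟫² - 2τ‖x‖²‖v‖²)`.
If `‖x‖ ≤ R` and `‖x - x₀‖ ≤ S`, the negative terms are at most `τ (8RS + 2R²) ‖v‖²` and the
exponential is at least `1 - τS²`, so once `τ (S² + 8RS + 2R²) ≤ 1/4` the second derivative is
at least `(3/4) (7/4) ‖v‖² ≥ ‖v‖²`. A bounded `X` lies in a ball `‖x‖ ≤ R`, and `S = R + ‖x₀‖`.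
-/

open scoped RealInnerProductSpace

section

variable {E : Type*} [NormedAddCommGroup E] [InnerProductSpace ℝ E]

theorem hasFDerivAt_exp_neg_mul_norm_sub_sq (τ : ℝ) (x₀ y : E) :
    HasFDerivAt (fun z : E => Real.exp (-τ * ‖z - x₀‖ ^ 2))
      ((-2 * τ * Real.exp (-τ * ‖y - x₀‖ ^ 2)) • innerSL ℝ (y - x₀)) y := by
  refine ((((hasFDerivAt_id y).sub_const x₀).norm_sq).const_mul (-τ)).exp.congr_fderiv ?_
  ext v
  simp
  ring

theorem fderiv_norm_sq_mul_exp_apply (τ : ℝ) (x₀ y v : E) :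
    fderiv ℝ (fun z : E => ‖z‖ ^ 2 * Real.exp (-τ * ‖z - x₀‖ ^ 2)) y v =
      Real.exp (-τ * ‖y - x₀‖ ^ 2) * (2 * ⟪y, v⟫ - 2 * τ * ‖y‖ ^ 2 * ⟪y - x₀, v⟫) := by
  have h : HasFDerivAt (fun z : E => ‖z‖ ^ 2 * Real.exp (-τ * ‖z - x₀‖ ^ 2)) _ y :=
    (hasStrictFDerivAt_norm_sq y).hasFDerivAt.mul (hasFDerivAt_exp_neg_mul_norm_sub_sq τ x₀ y)
  rw [h.fderiv]
  simp [inner_sub_left]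
  ring

theorem fderiv_fderiv_norm_sq_mul_exp_apply (τ : ℝ) (x₀ x v : E) :
    fderiv ℝ (fun y : E =>
        fderiv ℝ (fun z : E => ‖z‖ ^ 2 * Real.exp (-τ * ‖z - x₀‖ ^ 2)) y v) x v =
      Real.exp (-τ * ‖x - x₀‖ ^ 2) * (2 * ‖v‖ ^ 2 - 8 * τ * ⟪x, v⟫ * ⟪x - x₀, v⟫
        + 4 * τ ^ 2 * ‖x‖ ^ 2 * ⟪x - x₀, v⟫ ^ 2 - 2 * τ * ‖x‖ ^ 2 * ‖v‖ ^ 2) := by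
  simp_rw [fderiv_norm_sq_mul_exp_apply]
  have hinner : ∀ a : E, HasFDerivAt (fun y : E => ⟪y - a, v⟫) (innerSL ℝ v) x := fun a =>
    (((hasFDerivAt_id x).sub_const a).inner ℝ (hasFDerivAt_const v x)).congr_fderiv
      (by ext; simp [real_inner_comm])
  have h : HasFDerivAt (fun y : E => Real.exp (-τ * ‖y - x₀‖ ^ 2) *
      (2 * ⟪y - 0, v⟫ - 2 * τ * ‖y‖ ^ 2 * ⟪y - x₀, v⟫)) _ x :=
    (hasFDerivAt_exp_neg_mul_norm_sub_sq τ x₀ x).mul (((hinner 0).const_mul 2).sub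
      (((hasStrictFDerivAt_norm_sq x).hasFDerivAt.const_mul (2 * τ)).mul (hinner x₀)))
  simp only [sub_zero] at h
  rw [h.fderiv]
  simp [inner_sub_left]
  ring

theorem norm_sq_le_fderiv_fderiv_norm_sq_mul_exp {τ R S : ℝ} {x x₀ : E} (v : E) (hτ : 0 ≤ τ)
    (hx : ‖x‖ ≤ R) (hxx₀ : ‖x - x₀‖ ≤ S) (hτRS : τ * (S ^ 2 + 8 * R * S + 2 * R ^ 2) ≤ 1 / 4) :
    ‖v‖ ^ 2 ≤ fderiv ℝ (fun y : E =>
        fderiv ℝ (fun z : E => ‖z‖ ^ 2 * Real.exp (-τ * ‖z - x₀‖ ^ 2)) y v) x v := by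
  rw [fderiv_fderiv_norm_sq_mul_exp_apply]
  have hR : 0 ≤ R := (norm_nonneg x).trans hx
  have hS : 0 ≤ S := (norm_nonneg _).trans hxx₀
  have hτS : τ * ‖x - x₀‖ ^ 2 ≤ 1 / 4 := calc
    τ * ‖x - x₀‖ ^ 2 ≤ τ * (S ^ 2 + 8 * R * S + 2 * R ^ 2) := by
      gcongr; nlinarith [pow_le_pow_left₀ (norm_nonneg _) hxx₀ 2]
    _ ≤ 1 / 4 := hτRS
  have hexp : 3 / 4 ≤ Real.exp (-τ * ‖x - x₀‖ ^ 2) := by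
    linarith [Real.add_one_le_exp (-τ * ‖x - x₀‖ ^ 2)]
  have hinner : ⟪x, v⟫ * ⟪x - x₀, v⟫ ≤ R * S * ‖v‖ ^ 2 := calc
    ⟪x, v⟫ * ⟪x - x₀, v⟫ ≤ |⟪x, v⟫| * |⟪x - x₀, v⟫| := by rw [← abs_mul]; exact le_abs_self _
    _ ≤ (‖x‖ * ‖v‖) * (‖x - x₀‖ * ‖v‖) := by
      gcongr <;> exact abs_real_inner_le_norm _ _
    _ ≤ (R * ‖v‖) * (S * ‖v‖) := by gcongr
    _ = R * S * ‖v‖ ^ 2 := by ring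
  have hbracket : 7 / 4 * ‖v‖ ^ 2 ≤ 2 * ‖v‖ ^ 2 - 8 * τ * ⟪x, v⟫ * ⟪x - x₀, v⟫
      + 4 * τ ^ 2 * ‖x‖ ^ 2 * ⟪x - x₀, v⟫ ^ 2 - 2 * τ * ‖x‖ ^ 2 * ‖v‖ ^ 2 := by
    have h1 : 8 * τ * (⟪x, v⟫ * ⟪x - x₀, v⟫) ≤ 8 * τ * (R * S * ‖v‖ ^ 2) := by gcongr
    have h2 : 2 * τ * (‖x‖ ^ 2 * ‖v‖ ^ 2) ≤ 2 * τ * (R ^ 2 * ‖v‖ ^ 2) := by gcongr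
    have h3 : τ * (8 * R * S + 2 * R ^ 2) * ‖v‖ ^ 2 ≤ 1 / 4 * ‖v‖ ^ 2 := by
      gcongr; nlinarith [mul_nonneg hτ (sq_nonneg S)]
    nlinarith [mul_nonneg (mul_nonneg (sq_nonneg τ) (sq_nonneg ‖x‖)) (sq_nonneg ⟪x - x₀, v⟫)]
  calc ‖v‖ ^ 2 ≤ 3 / 4 * (7 / 4 * ‖v‖ ^ 2) := by nlinarith [sq_nonneg ‖v‖]
    _ ≤ _ := by gcongr

end

/-- On a bounded set `X`, the function `f_τ(x) = (Σ_j x_j²) exp(-τ‖x-x₀‖²)` has, for some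
`τ > 0`, a Hessian which is uniformly positive definite on `X`: `vᵀ ∇²f_τ(x) v ≥ ‖v‖²`
for all `v`, i.e. the smallest eigenvalue of the Hessian is at least `1` on `X`. -/
theorem exists_mean_function_convex (d : ℕ) (X : Set (EuclideanSpace ℝ (Fin d)))
    (hX : Bornology.IsBounded X) (x₀ : EuclideanSpace ℝ (Fin d)) :
    ∃ τ > (0 : ℝ), ∀ x ∈ X, ∀ v : EuclideanSpace ℝ (Fin d),
      ‖v‖ ^ 2 ≤ fderiv ℝ
        (fun y : EuclideanSpace ℝ (Fin d) =>
          fderiv ℝ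
            (fun z : EuclideanSpace ℝ (Fin d) =>
              (∑ j : Fin d, z j ^ 2) * Real.exp (-τ * ‖z - x₀‖ ^ 2)) y v)
        x v := by
  obtain ⟨R, hR, hXR⟩ := hX.subset_closedBall_lt 0 0
  set S := R + ‖x₀‖
  set A := S ^ 2 + 8 * R * S + 2 * R ^ 2
  have hA : 0 ≤ A := by positivity
  refine ⟨1 / (4 * (A + 1)), by positivity, fun x hx v => ?_⟩
  have hxR : ‖x‖ ≤ R := by simpa using hXR hx
  simp_rw [← EuclideanSpace.real_norm_sq_eq]
  refine norm_sq_le_fderiv_fderiv_norm_sq_mul_exp (S := S) v (by positivity) hxR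
    ((norm_sub_le x x₀).trans (by linarith)) ?_
  rw [div_mul_eq_mul_div, div_le_div_iff₀ (by positivity) (by norm_num)]
  linarith
end
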